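/- The smoothed value function F_λ is monotonically decreasing: for every λ > 0 and all real numbers t₁ ≤ t₂ one has F_λ(t₂) ≤ F_λ(t₁). -/

import Mathlib

open scoped BigOperators

/-- `f_k(Ω) = −(1/α)·|∑_n h_n e^{iΩ_n}|²`. -/
noncomputable def fObj {N : ℕ} (α : ℝ) (h : Fin N → ℂ) (Ω : Fin N → ℝ) : ℝ :=
  -(1 / α) * ‖∑ n, h n * Complex.exp (Complex.I * (Ω n : ℂ))‖ ^ 2

/-- `g_q(Ω) = |∑_n c_n e^{iΩ_n}|²`. -/
noncomputable def gObj {N : ℕ} (c : Fin N → ℂ) (Ω : Fin N → ℝ) : ℝ :=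
  ‖∑ n, c n * Complex.exp (Complex.I * (Ω n : ℂ))‖ ^ 2

/-- The unit simplex in Euclidean space `ℝ^m`. -/
def unitSimplex (m : ℕ) : Set (EuclideanSpace ℝ (Fin m)) :=
  {x | (∀ i, 0 ≤ x i) ∧ ∑ i, x i = 1}

/-- The compensated-convexity upper transform of the maximum function:
`C_λ(y) = λ‖y‖² − dist(2λy, Δ)²/(4λ) + 1/(4λ)`. -/
noncomputable def Cupper {m : ℕ} (lam : ℝ) (y : EuclideanSpace ℝ (Fin m)) : ℝ :=
  lam * ‖y‖ ^ 2 - (Metric.infDist ((2 * lam) • y) (unitSimplex m)) ^ 2 / (4 * lam) + 1 / (4 * lam)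

/-- `h(Ω,t) = (f_1(Ω)−t,…,f_K(Ω)−t, g_1(Ω)−σ_1,…,g_Q(Ω)−σ_Q) ∈ ℝ^{K+Q}`. -/
noncomputable def hVec {N K Q : ℕ} (h : Fin K → Fin N → ℂ) (α : Fin K → ℝ)
    (c : Fin Q → Fin N → ℂ) (σ : Fin Q → ℝ) (Ω : Fin N → ℝ) (t : ℝ) :
    EuclideanSpace ℝ (Fin (K + Q)) :=
  WithLp.toLp 2 (fun i => Fin.addCases (fun k => fObj (α k) (h k) Ω - t) (fun q => gObj (c q) Ω - σ q) i)

/-- `F(t) = inf_Ω max( max_k (f_k(Ω) − t), max_q (g_q(Ω) − σ_q) )`. -/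
noncomputable def Ffun {N K Q : ℕ} (h : Fin K → Fin N → ℂ) (α : Fin K → ℝ)
    (c : Fin Q → Fin N → ℂ) (σ : Fin Q → ℝ) (t : ℝ) : ℝ :=
  ⨅ Ω : Fin N → ℝ, max (⨆ k, (fObj (α k) (h k) Ω - t)) (⨆ q, (gObj (c q) Ω - σ q))

/-- `F_λ(t) = inf_Ω C_λ(h(Ω,t))`. -/
noncomputable def Flam {N K Q : ℕ} (h : Fin K → Fin N → ℂ) (α : Fin K → ℝ)
    (c : Fin Q → Fin N → ℂ) (σ : Fin Q → ℝ) (lam t : ℝ) : ℝ :=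
  ⨅ Ω : Fin N → ℝ, Cupper lam (hVec h α c σ Ω t)

/-!
For `λ > 0`, `C_λ(y) = (‖z‖² − dist(z, Δ)²)/(4λ) + 1/(4λ)` with `z = 2λy`, and
`‖z‖² − dist(z, Δ)² = max_{x ∈ Δ} (2⟪z, x⟫ − ‖x‖²)`. Since `Δ` lies in the nonnegative orthant,
each `2⟪z, x⟫ − ‖x‖²` is nondecreasing in every coordinate of `z`, hence so is `C_λ`. Raising `t`
lowers the first `K` coordinates of `h(Ω, t)` and fixes the others, so `C_λ(h(Ω, ·))` is
nonincreasing for each `Ω`. The infima compare because `C_λ(y) ≥ y_i` (take `x = e_i`), which bounds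
`C_λ(h(Ω, t))` below by `g_q(Ω) − σ_q ≥ −σ_q`.
-/

open Metric

lemma two_mul_inner_sub_sq_le_sq_sub_sq_infDist {E : Type*} [NormedAddCommGroup E]
    [InnerProductSpace ℝ E] {s : Set E} {x : E} (hx : x ∈ s) (z : E) :
    2 * inner ℝ z x - ‖x‖ ^ 2 ≤ ‖z‖ ^ 2 - infDist z s ^ 2 := by
  have hdist : infDist z s ^ 2 ≤ ‖z - x‖ ^ 2 := by
    gcongr
    · exact infDist_nonneg
    · simpa [dist_eq_norm] using infDist_le_dist_of_mem hx
  linarith [norm_sub_sq_real z x]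

lemma single_mem_unitSimplex {m : ℕ} (i : Fin m) :
    EuclideanSpace.single i (1 : ℝ) ∈ unitSimplex m := by
  refine ⟨fun j => ?_, by simp [PiLp.single_apply]⟩
  rw [PiLp.single_apply]
  split_ifs <;> norm_num

lemma isClosed_unitSimplex (m : ℕ) : IsClosed (unitSimplex m) := by
  have hproj (i : Fin m) : Continuous fun x : EuclideanSpace ℝ (Fin m) => x i :=
    (EuclideanSpace.proj (𝕜 := ℝ) i).continuous
  have hnonneg : IsClosed {x : EuclideanSpace ℝ (Fin m) | ∀ i, 0 ≤ x i} := by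
    simp only [Set.ofPred_forall]
    exact isClosed_iInter fun i => isClosed_le continuous_const (hproj i)
  exact hnonneg.inter
    (isClosed_eq (continuous_finsetSum _ fun i _ => hproj i) continuous_const)

lemma sq_norm_sub_sq_infDist_unitSimplex_mono {m : ℕ} (hm : 0 < m)
    {z z' : EuclideanSpace ℝ (Fin m)} (hzz' : ∀ i, z i ≤ z' i) :
    ‖z‖ ^ 2 - infDist z (unitSimplex m) ^ 2 ≤ ‖z'‖ ^ 2 - infDist z' (unitSimplex m) ^ 2 := by
  obtain ⟨x, hx, hdist⟩ := (isClosed_unitSimplex m).exists_infDist_eq_dist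
    ⟨_, single_mem_unitSimplex ⟨0, hm⟩⟩ z
  have hz : ‖z‖ ^ 2 - infDist z (unitSimplex m) ^ 2 = 2 * inner ℝ z x - ‖x‖ ^ 2 := by
    rw [hdist, dist_eq_norm, norm_sub_sq_real]
    ring
  have hinner : inner ℝ z x ≤ inner ℝ z' x := by
    simp only [PiLp.inner_apply, RCLike.inner_apply, conj_trivial]
    exact Finset.sum_le_sum fun i _ => mul_le_mul_of_nonneg_left (hzz' i) (hx.1 i)
  linarith [two_mul_inner_sub_sq_le_sq_sub_sq_infDist hx z']

lemma Cupper_eq {m : ℕ} {lam : ℝ} (hlam : 0 < lam) (y : EuclideanSpace ℝ (Fin m)) :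
    Cupper lam y = (‖(2 * lam) • y‖ ^ 2 - infDist ((2 * lam) • y) (unitSimplex m) ^ 2) / (4 * lam)
      + 1 / (4 * lam) := by
  rw [Cupper, norm_smul, Real.norm_of_nonneg (by positivity)]
  field_simp
  ring

lemma Cupper_mono {m : ℕ} (hm : 0 < m) {lam : ℝ} (hlam : 0 < lam)
    {y y' : EuclideanSpace ℝ (Fin m)} (hyy' : ∀ i, y i ≤ y' i) :
    Cupper lam y ≤ Cupper lam y' := by
  rw [Cupper_eq hlam, Cupper_eq hlam]
  have hscaled : ∀ i, ((2 * lam) • y) i ≤ ((2 * lam) • y') i := fun i => by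
    simp only [PiLp.smul_apply, smul_eq_mul]
    exact mul_le_mul_of_nonneg_left (hyy' i) (by positivity)
  gcongr ?_ / _ + _
  exact sq_norm_sub_sq_infDist_unitSimplex_mono hm hscaled

lemma apply_le_Cupper {m : ℕ} {lam : ℝ} (hlam : 0 < lam) (y : EuclideanSpace ℝ (Fin m))
    (i : Fin m) : y i ≤ Cupper lam y := by
  have hbound := two_mul_inner_sub_sq_le_sq_sub_sq_infDist (single_mem_unitSimplex i)
    ((2 * lam) • y)
  simp only [EuclideanSpace.inner_single_right, PiLp.norm_single, PiLp.smul_apply,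
    smul_eq_mul, conj_trivial, one_mul, norm_one, one_pow] at hbound
  rw [Cupper_eq hlam, ← add_div, le_div_iff₀ (by positivity)]
  linarith

lemma hVec_apply_le_of_le {N K Q : ℕ} (h : Fin K → Fin N → ℂ) (α : Fin K → ℝ)
    (c : Fin Q → Fin N → ℂ) (σ : Fin Q → ℝ) (Ω : Fin N → ℝ) {t₁ t₂ : ℝ} (ht : t₁ ≤ t₂)
    (i : Fin (K + Q)) : hVec h α c σ Ω t₂ i ≤ hVec h α c σ Ω t₁ i := by
  refine Fin.addCases (fun k => ?_) (fun q => ?_) i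
  · simp only [hVec, WithLp.ofLp_toLp, Fin.addCases_left]
    linarith
  · simp only [hVec, WithLp.ofLp_toLp, Fin.addCases_right, le_refl]

theorem stmt11_general {N K Q : ℕ} (hQ : 0 < Q)
    (h : Fin K → Fin N → ℂ) (α : Fin K → ℝ)
    (c : Fin Q → Fin N → ℂ) (σ : Fin Q → ℝ) (lam : ℝ) (hlam : 0 < lam) :
    ∀ t₁ t₂ : ℝ, t₁ ≤ t₂ → Flam h α c σ lam t₂ ≤ Flam h α c σ lam t₁ := by
  intro t₁ t₂ ht
  let q₀ : Fin Q := ⟨0, hQ⟩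
  have hbdd : BddBelow (Set.range fun Ω => Cupper lam (hVec h α c σ Ω t₂)) := by
    refine ⟨-σ q₀, Set.forall_mem_range.2 fun Ω => ?_⟩
    have hle := apply_le_Cupper hlam (hVec h α c σ Ω t₂) (Fin.natAdd K q₀)
    have hg : 0 ≤ gObj (c q₀) Ω := by unfold gObj; positivity
    have hcoord : hVec h α c σ Ω t₂ (Fin.natAdd K q₀) = gObj (c q₀) Ω - σ q₀ := by
      simp [hVec]
    linarith
  exact ciInf_mono hbdd fun Ω =>
    Cupper_mono (by omega) hlam (hVec_apply_le_of_le h α c σ Ω ht)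

/-- The smoothed value function `F_λ` is monotonically decreasing in `t`. -/
theorem stmt11 {N K Q : ℕ} (hN : 0 < N) (hK : 0 < K) (hQ : 0 < Q)
    (h : Fin K → Fin N → ℂ) (α : Fin K → ℝ) (hα : ∀ k, 0 < α k)
    (c : Fin Q → Fin N → ℂ) (σ : Fin Q → ℝ) (lam : ℝ) (hlam : 0 < lam) :
    ∀ t₁ t₂ : ℝ, t₁ ≤ t₂ → Flam h α c σ lam t₂ ≤ Flam h α c σ lam t₁ :=
  stmt11_general hQ h α c σ lam hlam
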